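/- Let α, β, V_th ∈ ℝ with α ≠ β, and let (I_in(n)), (s(n)) be real sequences. Define I_syn : ℕ → ℝ by I_syn(0) = 0 and I_syn(n+1) = α·I_syn(n) + I_in(n), and define u : ℕ → ℝ by u(0) = 0 and u(n+1) = β·u(n) + α·I_syn(n) + I_in(n) - V_th·s(n). Then for all N ≥ 1, u(N) = (1/(β-α))·Σ_{n=0}^{N-1}(β^{N-n} - α^{N-n})·I_in(n) - Σ_{n=0}^{N-1} β^{N-n-1}·V_th·s(n). -/
import Mathlib


/-- Closed-form unrolling of the second-order (synaptic-conductance) LIF recurrence. -/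
theorem stmt_2 (α β Vth : ℝ) (hab : α ≠ β) (Iin s : ℕ → ℝ)
    (Isyn u : ℕ → ℝ)
    (hI0 : Isyn 0 = 0)
    (hI : ∀ n, Isyn (n + 1) = α * Isyn n + Iin n)
    (hu0 : u 0 = 0)
    (hu : ∀ n, u (n + 1) = β * u n + α * Isyn n + Iin n - Vth * s n) :
    ∀ N : ℕ, 1 ≤ N →
      u N = (1 / (β - α)) * ∑ n ∈ Finset.range N, (β ^ (N - n) - α ^ (N - n)) * Iin n
              - ∑ n ∈ Finset.range N, β ^ (N - n - 1) * Vth * s n := by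
  have hba : β - α ≠ 0 := sub_ne_zero.mpr hab.symm
  have hIc : ∀ N : ℕ, Isyn N = ∑ n ∈ Finset.range N, α ^ (N - 1 - n) * Iin n := by
    intro N
    induction N with
    | zero => simp [hI0]
    | succ N ih =>
      rw [hI N, ih, Finset.mul_sum, Finset.sum_range_succ]
      congr 1
      · refine Finset.sum_congr rfl fun n hn => ?_
        have hn' : n < N := Finset.mem_range.mp hn
        have h1 : N - n = (N - 1 - n) + 1 := by omega
        have h2 : N + 1 - 1 - n = N - n := by omega
        rw [h2, h1, pow_succ]; ring
      · simp
  have key : ∀ N : ℕ,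
      u N = (1 / (β - α)) * ∑ n ∈ Finset.range N, (β ^ (N - n) - α ^ (N - n)) * Iin n
              - ∑ n ∈ Finset.range N, β ^ (N - n - 1) * Vth * s n := by
    intro N
    induction N with
    | zero => simp [hu0]
    | succ N ih =>
      rw [hu N, ih, hIc N, Finset.sum_range_succ, Finset.sum_range_succ]
      have hS1 : ∑ n ∈ Finset.range N, (β ^ (N + 1 - n) - α ^ (N + 1 - n)) * Iin n
          = β * ∑ n ∈ Finset.range N, (β ^ (N - n) - α ^ (N - n)) * Iin n
            + (β - α) * (α * ∑ n ∈ Finset.range N, α ^ (N - 1 - n) * Iin n) := by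
        rw [Finset.mul_sum, Finset.mul_sum, Finset.mul_sum, ← Finset.sum_add_distrib]
        refine Finset.sum_congr rfl fun n hn => ?_
        have hn' : n < N := Finset.mem_range.mp hn
        have h1 : N + 1 - n = (N - n) + 1 := by omega
        have h2 : N - n = (N - 1 - n) + 1 := by omega
        rw [h1, pow_succ, pow_succ, h2, pow_succ]; ring
      have hS2 : ∑ n ∈ Finset.range N, β ^ (N + 1 - n - 1) * Vth * s n
          = β * ∑ n ∈ Finset.range N, β ^ (N - n - 1) * Vth * s n := by
        rw [Finset.mul_sum]
        refine Finset.sum_congr rfl fun n hn => ?_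
        have hn' : n < N := Finset.mem_range.mp hn
        have h1 : N + 1 - n - 1 = (N - n - 1) + 1 := by omega
        rw [h1, pow_succ]; ring
      rw [hS1, hS2]
      have h3 : N + 1 - N = 1 := by omega
      rw [h3]
      norm_num
      field_simp
      ring
  exact fun N _ => key N
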